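/- arXiv:1608.04637 — 3 statements merged into one kernel-verified Lean document; each statement's English description precedes it below -/
import Mathlib

section
/- Let X be an irreducible, aperiodic, stationary first-order Markov chain on the finite alphabet 𝒳, let g: 𝒳 → 𝒴 and Y_n := g(X_n). Then X is k-lumpable with respect to g if and only if Δ_L^k(X, g) := H(Y_{k+1} | Y_1^k) − H(Y_{k+1} | Y_2^k, X_1) = 0. -/
open Filter

section MarkovAggregation

variable {𝒳 : Type*} {𝒴 : Type*} [Fintype 𝒳] [DecidableEq 𝒳] [Fintype 𝒴] [DecidableEq 𝒴]

/-- Shannon entropy of a probability mass function on a finite set. -/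
noncomputable def entPMF {α : Type*} [Fintype α] (p : α → ℝ) : ℝ :=
  ∑ a : α, Real.negMulLog (p a)

/-- Marginal of a joint pmf on the first component. -/
noncomputable def margFst {α β : Type*} [Fintype β] (p : α × β → ℝ) : α → ℝ :=
  fun a => ∑ b : β, p (a, b)

/-- Marginal of a joint pmf on the second component. -/
noncomputable def margSnd {α β : Type*} [Fintype α] (p : α × β → ℝ) : β → ℝ :=
  fun b => ∑ a : α, p (a, b)

/-- Conditional Shannon entropy H(A | B) of a joint pmf `p` of the pair (A, B). -/
noncomputable def condEntPMF {α β : Type*} [Fintype α] [Fintype β] (p : α × β → ℝ) : ℝ :=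
  entPMF p - entPMF (margSnd p)

/-- Mutual information I(A ; B) of a joint pmf `p` of the pair (A, B). -/
noncomputable def mutInfPMF {α β : Type*} [Fintype α] [Fintype β] (p : α × β → ℝ) : ℝ :=
  entPMF (margFst p) + entPMF (margSnd p) - entPMF p

/-- Probability that a first-order Markov chain with initial distribution `π` and transition
matrix `P` emits the path (x_0, ..., x_{n-1}). -/
noncomputable def xPath (π : 𝒳 → ℝ) (P : Matrix 𝒳 𝒳 ℝ) (n : ℕ) (x : Fin n → 𝒳) : ℝ :=
  (if h : 0 < n then π (x ⟨0, h⟩) else 1) *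
    ∏ i : Fin n, if h : i.val + 1 < n then P (x i) (x ⟨i.val + 1, h⟩) else 1

/-- Probability that the projection Y_n = g(X_n) emits the path (y_0, ..., y_{n-1}). -/
noncomputable def yPath (π : 𝒳 → ℝ) (P : Matrix 𝒳 𝒳 ℝ) (g : 𝒳 → 𝒴) (n : ℕ)
    (y : Fin n → 𝒴) : ℝ :=
  ∑ x : Fin n → 𝒳, if ∀ i, g (x i) = y i then xPath π P n x else 0

/-- Joint probability of (X_1, (Y_2, ..., Y_{m+1})). -/
noncomputable def xyPath (π : 𝒳 → ℝ) (P : Matrix 𝒳 𝒳 ℝ) (g : 𝒳 → 𝒴) (m : ℕ)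
    (x₀ : 𝒳) (y : Fin m → 𝒴) : ℝ :=
  ∑ x : Fin (m + 1) → 𝒳,
    if x 0 = x₀ ∧ ∀ i : Fin m, g (x i.succ) = y i then xPath π P (m + 1) x else 0

/-- A matrix is primitive iff some power (and all larger powers) of it is entrywise positive;
for a stochastic matrix this is equivalent to being irreducible and aperiodic. -/
def PrimitiveMatrix (P : Matrix 𝒳 𝒳 ℝ) : Prop :=
  ∃ N : ℕ, ∀ n : ℕ, N ≤ n → ∀ i j : 𝒳, 0 < (P ^ n) i j

/-- A Markov chain with transition matrix `P` is `k`-lumpable w.r.t. `g` iff for every initial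
distribution `π` the projected process is a `k`-th order Markov chain whose transition matrix `Q`
does not depend on `π`. -/
def Lumpable (P : Matrix 𝒳 𝒳 ℝ) (g : 𝒳 → 𝒴) (k : ℕ) : Prop :=
  ∃ Q : (Fin k → 𝒴) → 𝒴 → ℝ,
    ∀ π : 𝒳 → ℝ, (∀ x, 0 ≤ π x) → (∑ x, π x = 1) →
      ∀ n : ℕ, ∀ hn : k ≤ n, ∀ y : Fin n → 𝒴, ∀ j : 𝒴,
        yPath π P g (n + 1) (Fin.snoc y j) =
          yPath π P g n y *
            Q (fun i : Fin k => y ⟨n - k + i.val, by have := i.isLt; omega⟩) j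

/-- The lumpability cost Δ_L^{k+1}(X, g) = H(Y_{k+2} | Y_1^{k+1}) - H(Y_{k+2} | Y_2^{k+1}, X_1),
for the stationary chain with invariant distribution `μ` and transition matrix `P`. -/
noncomputable def lumpCost (μ : 𝒳 → ℝ) (P : Matrix 𝒳 𝒳 ℝ) (g : 𝒳 → 𝒴) (k : ℕ) : ℝ :=
  condEntPMF (fun q : 𝒴 × (Fin (k + 1) → 𝒴) => yPath μ P g (k + 2) (Fin.snoc q.2 q.1)) -
  condEntPMF (fun q : 𝒴 × (𝒳 × (Fin k → 𝒴)) =>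
    xyPath μ P g (k + 1) q.2.1 (Fin.snoc q.2.2 q.1))

/-- The predictability cost Δ_P^{k+1}(X, g) = I(X_2 ; X_1) - I(Y_{k+2} ; Y_1^{k+1}),
for the stationary chain with invariant distribution `μ` and transition matrix `P`. -/
noncomputable def predCost (μ : 𝒳 → ℝ) (P : Matrix 𝒳 𝒳 ℝ) (g : 𝒳 → 𝒴) (k : ℕ) : ℝ :=
  mutInfPMF (fun q : 𝒳 × 𝒳 => μ q.1 * P q.1 q.2) -
  mutInfPMF (fun q : 𝒴 × (Fin (k + 1) → 𝒴) => yPath μ P g (k + 2) (Fin.snoc q.2 q.1))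

/-- Path probabilities of a stationary `K`-th order Markov chain on `𝒴` with stationary
`K`-dimensional distribution `ρ` and transition matrix `R`. -/
noncomputable def mkvPath {K : ℕ} (ρ : (Fin K → 𝒴) → ℝ) (R : (Fin K → 𝒴) → 𝒴 → ℝ)
    (n : ℕ) (y : Fin n → 𝒴) : ℝ :=
  if h : K ≤ n then
    ρ (fun i => y ⟨i.val, lt_of_lt_of_le i.isLt h⟩) *
      ∏ m : Fin n, if hm : K ≤ m.val then
        R (fun i => y ⟨m.val - K + i.val, by have h1 := i.isLt; have h2 := m.isLt; omega⟩) (y m)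
      else 1
  else
    ∑ z : Fin K → 𝒴, if ∀ i : Fin n, z ⟨i.val, by have := i.isLt; omega⟩ = y i then ρ z else 0

end MarkovAggregation

/-!
Since `Y_1 = g X_1`, the block `Y_1^{k+1}` is a function of `(X_1, Y_2^{k+1})`, and the gap `Δ`
is the Kullback–Leibler divergence from the joint law of `(Y_{k+2}, X_1, Y_2^{k+1})` to the law
in which `Y_{k+2}` sees `(X_1, Y_2^{k+1})` only through `Y_1^{k+1}`. By Gibbs' inequality,
`Δ = 0` iff `P(Y_{k+2} = j | X_1 = z, Y_2^{k+1} = v) = Q(g z, v; j)` for a kernel `Q`, wherever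
`μ z > 0`.
A primitive chain has a positive stationary law, so this is a statement about every starting
state `z`. By the Markov property of `X` such a kernel is the same thing as a `(k+1)`-th order
transition matrix for `Y` under every initial law: point masses give one direction, and
conditioning on the first state and inducting on the path length gives the other.
-/

open Finset InformationTheory
open Real (log log_div log_mul negMulLog)

namespace MarkovLumpability

section Pushforward

variable {γ δ ε : Type*} [Fintype γ] [DecidableEq δ]

noncomputable def pmfMap (φ : γ → δ) (r : γ → ℝ) (d : δ) : ℝ :=
  ∑ c, if φ c = d then r c else 0

lemma pmfMap_nonneg {r : γ → ℝ} (hr : ∀ c, 0 ≤ r c) (φ : γ → δ) (d : δ) : 0 ≤ pmfMap φ r d :=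
  sum_nonneg fun c _ => by split_ifs <;> simp [hr c]

lemma le_pmfMap {r : γ → ℝ} (hr : ∀ c, 0 ≤ r c) (φ : γ → δ) (c : γ) :
    r c ≤ pmfMap φ r (φ c) := by
  simpa [pmfMap] using single_le_sum (f := fun c' => if φ c' = φ c then r c' else 0)
    (fun c' _ => by split_ifs <;> simp [hr c']) (mem_univ c)

lemma sum_pmfMap_mul [Fintype δ] (φ : γ → δ) (r : γ → ℝ) (F : δ → ℝ) :
    ∑ d, pmfMap φ r d * F d = ∑ c, r c * F (φ c) := by
  simp only [pmfMap, sum_mul, ite_mul, zero_mul]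
  rw [sum_comm]
  exact sum_congr rfl fun c _ => Fintype.sum_ite_eq _ _

lemma pmfMap_pmfMap [Fintype δ] [DecidableEq ε] (φ : γ → δ) (ψ : δ → ε) (r : γ → ℝ) :
    pmfMap ψ (pmfMap φ r) = pmfMap (ψ ∘ φ) r := by
  ext e
  simpa [pmfMap] using sum_pmfMap_mul φ r fun d => if ψ d = e then 1 else 0

lemma margSnd_eq_pmfMap {α β : Type*} [Fintype α] [Fintype β] [DecidableEq β] (p : α × β → ℝ) :
    margSnd p = pmfMap Prod.snd p := by
  ext b
  simp [margSnd, pmfMap, Fintype.sum_prod_type]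

lemma entPMF_eq_neg_sum_mul_log (r : γ → ℝ) : entPMF r = -∑ c, r c * log (r c) := by
  simp [entPMF, negMulLog, sum_neg_distrib]

lemma entPMF_pmfMap [Fintype δ] (φ : γ → δ) (r : γ → ℝ) :
    entPMF (pmfMap φ r) = -∑ c, r c * log (pmfMap φ r (φ c)) := by
  rw [entPMF_eq_neg_sum_mul_log, sum_pmfMap_mul φ r fun d => log (pmfMap φ r d)]

lemma mul_log_sub_log_eq_mul_klFun {p q : ℝ} (hp : 0 ≤ p) (hpq : q = 0 → p = 0) :
    p * (log p - log q) = q * klFun (p / q) + (p - q) := by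
  rcases hp.eq_or_lt with rfl | hp
  · simp [klFun_zero]
  have hq : q ≠ 0 := fun h => hp.ne' (hpq h)
  rw [klFun_apply, log_div hp.ne' hq]
  field_simp
  ring

theorem sum_mul_log_sub_log_eq_zero_iff {ι : Type*} [Fintype ι] {p q : ι → ℝ}
    (hp : ∀ i, 0 ≤ p i) (hq : ∀ i, 0 ≤ q i) (hpq : ∀ i, q i = 0 → p i = 0)
    (hsum : ∑ i, p i = ∑ i, q i) :
    ∑ i, p i * (log (p i) - log (q i)) = 0 ↔ p = q := by
  simp only [fun i => mul_log_sub_log_eq_mul_klFun (hp i) (hpq i), sum_add_distrib,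
    sum_sub_distrib, hsum, sub_self, add_zero]
  rw [sum_eq_zero_iff_of_nonneg fun i _ => mul_nonneg (hq i)
    (klFun_nonneg (div_nonneg (hp i) (hq i))), funext_iff]
  refine forall_congr' fun i => ?_
  simp only [mem_univ, true_implies, mul_eq_zero, klFun_eq_zero_iff (div_nonneg (hp i) (hq i))]
  constructor
  · rintro (h | h)
    · rw [h, hpq i h]
    · exact (div_eq_one_iff_eq fun h0 => by simp [h0] at h).1 h
  · intro h
    by_cases h0 : q i = 0
    · exact Or.inl h0
    · exact Or.inr ((div_eq_one_iff_eq h0).2 h)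

end Pushforward

section CondEnt

variable {A B C : Type*} [Fintype A] [Fintype C] [DecidableEq B] (f : C → B) {p : A × C → ℝ}

lemma le_margSnd (hp : ∀ x, 0 ≤ p x) (x : A × C) : p x ≤ margSnd p x.2 := by
  classical
  rw [margSnd_eq_pmfMap]
  exact le_pmfMap hp Prod.snd x

lemma margSnd_le_pmfMap (hp : ∀ x, 0 ≤ p x) (c : C) :
    margSnd p c ≤ pmfMap (f ∘ Prod.snd) p (f c) := by
  classical
  rw [← pmfMap_pmfMap, ← margSnd_eq_pmfMap]
  exact le_pmfMap (fun c => sum_nonneg fun a _ => hp (a, c)) f c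

variable [DecidableEq A]

/-- `p` with `A` made conditionally independent of `C` given `f C`, keeping the laws of `C` and
of `(A, f C)`; the denominator vanishes only where `p` does. -/
noncomputable def coarseJoint (p : A × C → ℝ) (x : A × C) : ℝ :=
  margSnd p x.2 * pmfMap (Prod.map id f) p (x.1, f x.2) / pmfMap (f ∘ Prod.snd) p (f x.2)

lemma coarseJoint_nonneg (hp : ∀ x, 0 ≤ p x) (x : A × C) : 0 ≤ coarseJoint f p x :=
  div_nonneg (mul_nonneg (sum_nonneg fun a _ => hp (a, x.2)) (pmfMap_nonneg hp _ _))
    (pmfMap_nonneg hp _ _)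

lemma coarseJoint_pos (hp : ∀ x, 0 ≤ p x) {x : A × C} (hx : 0 < p x) : 0 < coarseJoint f p x :=
  div_pos (mul_pos (hx.trans_le (le_margSnd hp x)) (hx.trans_le (le_pmfMap hp _ x)))
    ((hx.trans_le (le_margSnd hp x)).trans_le (margSnd_le_pmfMap f hp x.2))

lemma pmfMap_prodMap_apply (p : A × C → ℝ) (a : A) (b : B) :
    pmfMap (Prod.map id f) p (a, b) = pmfMap f (fun c => p (a, c)) b := by
  simp [pmfMap, Fintype.sum_prod_type, Prod.ext_iff, ite_and]

lemma coarseJoint_eq_self_iff (hp : ∀ x, 0 ≤ p x) :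
    coarseJoint f p = p ↔ ∃ κ : B → A → ℝ, ∀ a c, p (a, c) = margSnd p c * κ (f c) a := by
  constructor
  · intro h
    refine ⟨fun b a => pmfMap (Prod.map id f) p (a, b) / pmfMap (f ∘ Prod.snd) p b, fun a c => ?_⟩
    rw [← mul_div_assoc]
    exact (congrFun h (a, c)).symm
  · rintro ⟨κ, hκ⟩
    ext ⟨a, c⟩
    have hAB : pmfMap (Prod.map id f) p (a, f c) = pmfMap (f ∘ Prod.snd) p (f c) * κ (f c) a := by
      classical
      rw [pmfMap_prodMap_apply, ← pmfMap_pmfMap, ← margSnd_eq_pmfMap, pmfMap, pmfMap, sum_mul]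
      refine sum_congr rfl fun c' _ => ?_
      split_ifs with hc'
      · rw [hκ, hc']
      · rw [zero_mul]
    rw [coarseJoint, hAB]
    rcases (pmfMap_nonneg hp (f ∘ Prod.snd) (f c)).eq_or_lt with h | h
    · have hC : margSnd p c = 0 :=
        le_antisymm (h ▸ margSnd_le_pmfMap f hp c) (sum_nonneg fun a _ => hp (a, c))
      simp [hκ, hC]
    · rw [hκ a c]
      field_simp

variable [Fintype B]

lemma margSnd_pmfMap_prodMap (p : A × C → ℝ) :
    margSnd (pmfMap (Prod.map id f) p) = pmfMap (f ∘ Prod.snd) p := by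
  rw [margSnd_eq_pmfMap, pmfMap_pmfMap]
  rfl

lemma sum_coarseJoint (hp : ∀ x, 0 ≤ p x) : ∑ x, coarseJoint f p x = ∑ x, p x := by
  have hfiber (c : C) : ∑ a, coarseJoint f p (a, c) = margSnd p c := by
    simp only [coarseJoint, ← sum_div, ← mul_sum]
    rw [← margSnd, margSnd_pmfMap_prodMap]
    rcases (pmfMap_nonneg hp (f ∘ Prod.snd) (f c)).eq_or_lt with h | h
    · rw [← h, div_zero]
      exact (le_antisymm (h ▸ margSnd_le_pmfMap f hp c) (sum_nonneg fun a _ => hp (a, c))).symm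
    · rw [mul_div_assoc, div_self h.ne', mul_one]
  rw [Fintype.sum_prod_type_right, sum_congr rfl fun c _ => hfiber c, Fintype.sum_prod_type_right]
  rfl

lemma condEntPMF_pmfMap_sub_condEntPMF (hp : ∀ x, 0 ≤ p x) :
    condEntPMF (pmfMap (Prod.map id f) p) - condEntPMF p =
      ∑ x, p x * (log (p x) - log (coarseJoint f p x)) := by
  classical
  have hterm (x : A × C) : p x * (log (p x) - log (coarseJoint f p x)) =
      p x * log (p x) + p x * log (pmfMap (f ∘ Prod.snd) p (f x.2)) -
        p x * log (margSnd p x.2) - p x * log (pmfMap (Prod.map id f) p (x.1, f x.2)) := by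
    rcases (hp x).eq_or_lt with h | h
    · simp [← h]
    have hC := h.trans_le (le_margSnd hp x)
    have hAB : 0 < pmfMap (Prod.map id f) p (x.1, f x.2) := h.trans_le (le_pmfMap hp _ x)
    rw [coarseJoint, log_div (mul_pos hC hAB).ne' (hC.trans_le (margSnd_le_pmfMap f hp x.2)).ne',
      log_mul hC.ne' hAB.ne']
    ring
  simp only [hterm, sum_sub_distrib, sum_add_distrib, condEntPMF, margSnd_pmfMap_prodMap,
    entPMF_pmfMap, entPMF_eq_neg_sum_mul_log p, margSnd_eq_pmfMap p]
  simp only [Function.comp_apply,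
    show ∀ x : A × C, Prod.map id f x = (x.1, f x.2) from fun _ => rfl]
  ring

theorem condEntPMF_pmfMap_eq_iff (hp : ∀ x, 0 ≤ p x) :
    condEntPMF (pmfMap (Prod.map id f) p) = condEntPMF p ↔
      ∃ κ : B → A → ℝ, ∀ a c, p (a, c) = margSnd p c * κ (f c) a := by
  have hpq (x : A × C) (hx : coarseJoint f p x = 0) : p x = 0 :=
    (hp x).eq_or_lt.elim Eq.symm fun h => absurd hx (coarseJoint_pos f hp h).ne'
  rw [← sub_eq_zero, condEntPMF_pmfMap_sub_condEntPMF f hp,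
    sum_mul_log_sub_log_eq_zero_iff hp (coarseJoint_nonneg f hp) hpq (sum_coarseJoint f hp).symm,
    eq_comm, coarseJoint_eq_self_iff f hp]

end CondEnt

lemma _root_.Fin.tail_snoc {α : Type*} {m : ℕ} (v : Fin (m + 1) → α) (j : α) :
    Fin.tail (Fin.snoc v j : Fin (m + 2) → α) = Fin.snoc (Fin.tail v) j := by
  conv_lhs => rw [← Fin.cons_self_tail v, ← Fin.cons_snoc_eq_snoc_cons, Fin.tail_cons]

lemma sum_fun_fin_succ {α M : Type*} [Fintype α] [AddCommMonoid M] {n : ℕ}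
    (F : (Fin (n + 1) → α) → M) :
    ∑ x, F x = ∑ a, ∑ q : Fin n → α, F (Fin.cons a q) := by
  rw [← (Fin.consEquiv fun _ => α).sum_comp, Fintype.sum_prod_type]
  rfl

section Markov

variable {𝒳 𝒴 : Type*}

lemma xPath_succ (π : 𝒳 → ℝ) (P : Matrix 𝒳 𝒳 ℝ) {m : ℕ} (x : Fin (m + 1) → 𝒳) :
    xPath π P (m + 1) x = π (x 0) * ∏ i : Fin m, P (x i.castSucc) (x i.succ) := by
  simp [xPath, Fin.prod_univ_castSucc, Fin.succ]

lemma xPath_cons (π : 𝒳 → ℝ) (P : Matrix 𝒳 𝒳 ℝ) {m : ℕ} (z : 𝒳) (q : Fin (m + 1) → 𝒳) :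
    xPath π P (m + 2) (Fin.cons z q) = π z * xPath (P z) P (m + 1) q := by
  simp [xPath_succ, Fin.prod_univ_succ]

variable [Fintype 𝒳] [DecidableEq 𝒴]

/-- `yPathFrom P g z m v = P(Y_2^{m+1} = v | X_1 = z)`. -/
noncomputable def yPathFrom (P : Matrix 𝒳 𝒳 ℝ) (g : 𝒳 → 𝒴) : 𝒳 → (m : ℕ) → (Fin m → 𝒴) → ℝ
  | _, 0, _ => 1
  | z, m + 1, v => ∑ z', if g z' = v 0 then P z z' * yPathFrom P g z' m (Fin.tail v) else 0

@[simp] lemma yPathFrom_zero (P : Matrix 𝒳 𝒳 ℝ) (g : 𝒳 → 𝒴) (z : 𝒳) (v : Fin 0 → 𝒴) :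
    yPathFrom P g z 0 v = 1 := rfl

lemma yPathFrom_succ (P : Matrix 𝒳 𝒳 ℝ) (g : 𝒳 → 𝒴) (z : 𝒳) {m : ℕ} (v : Fin (m + 1) → 𝒴) :
    yPathFrom P g z (m + 1) v =
      ∑ z', if g z' = v 0 then P z z' * yPathFrom P g z' m (Fin.tail v) else 0 := rfl

lemma yPathFrom_nonneg {P : Matrix 𝒳 𝒳 ℝ} (hP0 : ∀ i j, 0 ≤ P i j) (g : 𝒳 → 𝒴) (z : 𝒳) {m : ℕ}
    (v : Fin m → 𝒴) : 0 ≤ yPathFrom P g z m v := by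
  induction m generalizing z with
  | zero => exact zero_le_one
  | succ m ih =>
    exact sum_nonneg fun z' _ => by split_ifs <;> simp [mul_nonneg (hP0 z z') (ih z' _)]

lemma sum_yPathFrom_snoc [Fintype 𝒴] {P : Matrix 𝒳 𝒳 ℝ} (hP1 : ∀ i, ∑ j, P i j = 1)
    (g : 𝒳 → 𝒴) (z : 𝒳) {m : ℕ} (v : Fin m → 𝒴) :
    ∑ j, yPathFrom P g z (m + 1) (Fin.snoc v j) = yPathFrom P g z m v := by
  induction m generalizing z with
  | zero =>
    simp only [yPathFrom_succ, yPathFrom_zero, mul_one, Fin.snoc_zero]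
    rw [sum_comm]
    simp [hP1]
  | succ m ih =>
    simp only [yPathFrom_succ (m := m + 1), Fin.snoc_apply_zero, Fin.tail_snoc]
    rw [sum_comm]
    refine sum_congr rfl fun z' _ => ?_
    split_ifs <;> simp [← mul_sum, ih]

variable [DecidableEq 𝒳]

lemma xyPath_eq_sum (π : 𝒳 → ℝ) (P : Matrix 𝒳 𝒳 ℝ) (g : 𝒳 → 𝒴) {m : ℕ} (z : 𝒳)
    (v : Fin m → 𝒴) :
    xyPath π P g m z v = ∑ q : Fin m → 𝒳,
      if ∀ i, g (q i) = v i then xPath π P (m + 1) (Fin.cons z q) else 0 := by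
  simp [xyPath, sum_fun_fin_succ (n := m), ite_and]

lemma xyPath_zero (π : 𝒳 → ℝ) (P : Matrix 𝒳 𝒳 ℝ) (g : 𝒳 → 𝒴) (z : 𝒳) (v : Fin 0 → 𝒴) :
    xyPath π P g 0 z v = π z := by
  simp [xyPath_eq_sum, xPath_succ]

lemma xyPath_succ (π : 𝒳 → ℝ) (P : Matrix 𝒳 𝒳 ℝ) (g : 𝒳 → 𝒴) {m : ℕ} (z : 𝒳)
    (v : Fin (m + 1) → 𝒴) : xyPath π P g (m + 1) z v = π z * yPath (P z) P g (m + 1) v := by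
  simp [xyPath_eq_sum, yPath, xPath_cons, mul_sum]

lemma yPath_succ_eq_sum_xyPath (π : 𝒳 → ℝ) (P : Matrix 𝒳 𝒳 ℝ) (g : 𝒳 → 𝒴) {m : ℕ}
    (y : Fin (m + 1) → 𝒴) :
    yPath π P g (m + 1) y = ∑ z, if g z = y 0 then xyPath π P g m z (Fin.tail y) else 0 := by
  simp only [yPath, xyPath_eq_sum, sum_fun_fin_succ (n := m), Fin.forall_fin_succ, ite_and,
    Fin.cons_zero, Fin.cons_succ, sum_ite_irrel, sum_const_zero]
  rfl

lemma xyPath_eq_mul_yPathFrom (π : 𝒳 → ℝ) (P : Matrix 𝒳 𝒳 ℝ) (g : 𝒳 → 𝒴) {m : ℕ} (z : 𝒳)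
    (v : Fin m → 𝒴) : xyPath π P g m z v = π z * yPathFrom P g z m v := by
  induction m generalizing π z with
  | zero => simp [xyPath_zero, yPathFrom]
  | succ m ih =>
    simp only [xyPath_succ, yPath_succ_eq_sum_xyPath, ih, yPathFrom]

lemma yPath_succ (π : 𝒳 → ℝ) (P : Matrix 𝒳 𝒳 ℝ) (g : 𝒳 → 𝒴) {m : ℕ} (y : Fin (m + 1) → 𝒴) :
    yPath π P g (m + 1) y = ∑ z, if g z = y 0 then π z * yPathFrom P g z m (Fin.tail y) else 0 := by
  simp only [yPath_succ_eq_sum_xyPath, xyPath_eq_mul_yPathFrom]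

lemma yPath_single_cons (P : Matrix 𝒳 𝒳 ℝ) (g : 𝒳 → 𝒴) (z : 𝒳) {m : ℕ} (v : Fin m → 𝒴) :
    yPath (Pi.single z 1) P g (m + 1) (Fin.cons (g z) v) = yPathFrom P g z m v := by
  rw [yPath_succ, sum_eq_single z (fun x _ hx => by simp [hx]) (by simp)]
  simp

end Markov

section Lumpability

variable {𝒳 𝒴 : Type*} [Fintype 𝒳] [DecidableEq 𝒴] {P : Matrix 𝒳 𝒳 ℝ} {g : 𝒳 → 𝒴}

theorem yPathFrom_snoc_of_kernel {k : ℕ} {Q : (Fin (k + 1) → 𝒴) → 𝒴 → ℝ}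
    (hQ : ∀ z v j, yPathFrom P g z (k + 1) (Fin.snoc v j) =
      yPathFrom P g z k v * Q (Fin.cons (g z) v) j)
    {m : ℕ} (hm : k ≤ m) (z : 𝒳) (v : Fin m → 𝒴) (j : 𝒴) :
    yPathFrom P g z (m + 1) (Fin.snoc v j) =
      yPathFrom P g z m v *
        Q (fun i => (Fin.cons (g z) v : Fin (m + 1) → 𝒴) ⟨m - k + i, by omega⟩) j := by
  induction m, hm using Nat.le_induction generalizing z with
  | base =>
    rw [hQ]
    simp
  | succ m hm ih =>
    rw [yPathFrom_succ, yPathFrom_succ, sum_mul]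
    simp only [Fin.snoc_apply_zero, Fin.tail_snoc]
    refine sum_congr rfl fun z' _ => ?_
    split_ifs with h
    · rw [ih, mul_assoc]
      congr 3
      ext i
      have : (⟨m + 1 - k + i, by omega⟩ : Fin (m + 2)) = Fin.succ ⟨m - k + i, by omega⟩ :=
        Fin.ext (by simp; omega)
      rw [h, Fin.cons_self_tail, this, Fin.cons_succ]
    · rw [zero_mul]

theorem lumpable_iff_exists_kernel (k : ℕ) :
    Lumpable P g (k + 1) ↔ ∃ Q : (Fin (k + 1) → 𝒴) → 𝒴 → ℝ, ∀ z v j,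
      yPathFrom P g z (k + 1) (Fin.snoc v j) = yPathFrom P g z k v * Q (Fin.cons (g z) v) j := by
  classical
  constructor
  · rintro ⟨Q, hQ⟩
    refine ⟨Q, fun z v j => ?_⟩
    have := hQ (Pi.single z 1) (fun x => by rw [Pi.single_apply]; positivity) (by simp)
      (k + 1) le_rfl (Fin.cons (g z) v) j
    rw [← Fin.cons_snoc_eq_snoc_cons, yPath_single_cons, yPath_single_cons] at this
    simpa using this
  · rintro ⟨Q, hQ⟩
    refine ⟨Q, fun π _ _ n hn y j => ?_⟩
    obtain ⟨m, rfl⟩ : ∃ m, n = m + 1 := ⟨n - 1, by omega⟩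
    rw [yPath_succ, yPath_succ, sum_mul]
    simp only [Fin.snoc_apply_zero, Fin.tail_snoc]
    refine sum_congr rfl fun z _ => ?_
    split_ifs with h
    · rw [yPathFrom_snoc_of_kernel hQ (by omega), mul_assoc]
      congr 3
      ext i
      rw [h, Fin.cons_self_tail]
      congr 1
      ext
      simp
    · rw [zero_mul]

end Lumpability

theorem pos_of_stationary_of_primitive {𝒳 : Type*} [Fintype 𝒳] [DecidableEq 𝒳]
    {P : Matrix 𝒳 𝒳 ℝ} (hprim : PrimitiveMatrix P) {μ : 𝒳 → ℝ} (hμ0 : ∀ x, 0 ≤ μ x)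
    (hμ1 : ∑ x, μ x = 1) (hμ2 : ∀ j, ∑ i, μ i * P i j = μ j) (x : 𝒳) : 0 < μ x := by
  obtain ⟨N, hN⟩ := hprim
  have hinv (n : ℕ) : Matrix.vecMul μ (P ^ n) = μ := by
    induction n with
    | zero => simp
    | succ n ih => rw [pow_succ, ← Matrix.vecMul_vecMul, ih]; exact funext hμ2
  obtain ⟨i, -, hi⟩ := exists_lt_of_sum_lt (s := univ) (f := 0) (g := μ) (by simp [hμ1])
  rw [← hinv N]
  exact sum_pos' (fun j _ => mul_nonneg (hμ0 j) (hN N le_rfl j x).le)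
    ⟨i, mem_univ i, mul_pos hi (hN N le_rfl i x)⟩

section LumpCost

variable {𝒳 𝒴 : Type*} [Fintype 𝒳] [DecidableEq 𝒳] [DecidableEq 𝒴]

/-- Joint law of `(Y_{k+2}, (X_1, Y_2^{k+1}))`. -/
noncomputable def xyJoint (μ : 𝒳 → ℝ) (P : Matrix 𝒳 𝒳 ℝ) (g : 𝒳 → 𝒴) (k : ℕ)
    (q : 𝒴 × (𝒳 × (Fin k → 𝒴))) : ℝ :=
  xyPath μ P g (k + 1) q.2.1 (Fin.snoc q.2.2 q.1)

lemma lumpCost_eq [Fintype 𝒴] (μ : 𝒳 → ℝ) (P : Matrix 𝒳 𝒳 ℝ) (g : 𝒳 → 𝒴) (k : ℕ) :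
    lumpCost μ P g k =
      condEntPMF (pmfMap (Prod.map id fun c : 𝒳 × (Fin k → 𝒴) =>
        (Fin.cons (g c.1) c.2 : Fin (k + 1) → 𝒴))
        (xyJoint μ P g k)) - condEntPMF (xyJoint μ P g k) := by
  unfold lumpCost
  congr 2
  ext ⟨j, b⟩
  obtain ⟨a, w, rfl⟩ : ∃ a w, b = Fin.cons a w := ⟨b 0, Fin.tail b, (Fin.cons_self_tail b).symm⟩
  rw [pmfMap_prodMap_apply, ← Fin.cons_snoc_eq_snoc_cons, yPath_succ_eq_sum_xyPath]
  simp [pmfMap, Fintype.sum_prod_type, Fin.cons_inj, ite_and, xyJoint]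

end LumpCost

end MarkovLumpability

open MarkovLumpability

/-- information-theoretic characterization of lumpability: an irreducible,
aperiodic, stationary first-order Markov chain `X` (invariant distribution `μ`, transition matrix
`P`) is `(k+1)`-lumpable w.r.t. `g` if and only if
Δ_L^{k+1}(X, g) = H(Y_{k+2} | Y_1^{k+1}) − H(Y_{k+2} | Y_2^{k+1}, X_1) = 0.
(The order of the chain is written as `k+1` so that it ranges over all orders ≥ 1.) -/
theorem stmt4 {𝒳 𝒴 : Type*} [Fintype 𝒳] [DecidableEq 𝒳] [Fintype 𝒴] [DecidableEq 𝒴]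
    (P : Matrix 𝒳 𝒳 ℝ) (hP0 : ∀ i j, 0 ≤ P i j) (hP1 : ∀ i, ∑ j : 𝒳, P i j = 1)
    (hprim : PrimitiveMatrix P)
    (μ : 𝒳 → ℝ) (hμ0 : ∀ x, 0 ≤ μ x) (hμ1 : ∑ x : 𝒳, μ x = 1)
    (hμ2 : ∀ j, ∑ i : 𝒳, μ i * P i j = μ j)
    (g : 𝒳 → 𝒴) (k : ℕ) :
    Lumpable P g (k + 1) ↔ lumpCost μ P g k = 0 := by
  have hμ := pos_of_stationary_of_primitive hprim hμ0 hμ1 hμ2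
  have hjoint (j : 𝒴) (z : 𝒳) (v : Fin k → 𝒴) :
      xyJoint μ P g k (j, (z, v)) = μ z * yPathFrom P g z (k + 1) (Fin.snoc v j) :=
    xyPath_eq_mul_yPathFrom ..
  have hnonneg : ∀ q, 0 ≤ xyJoint μ P g k q := fun ⟨j, z, v⟩ => by
    rw [hjoint]
    exact mul_nonneg (hμ0 z) (yPathFrom_nonneg hP0 g z _)
  rw [lumpable_iff_exists_kernel, lumpCost_eq, sub_eq_zero, condEntPMF_pmfMap_eq_iff _ hnonneg]
  refine exists_congr fun Q => ?_
  simp only [Prod.forall, margSnd, hjoint, ← mul_sum, sum_yPathFrom_snoc hP1, mul_assoc]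
  exact ⟨fun h j z v => by rw [h], fun h z v j => mul_left_cancel₀ (hμ z).ne' (h j z v)⟩
end

section
/- Let X be an irreducible, aperiodic, stationary first-order Markov chain on the finite alphabet 𝒳, let g: 𝒳 → 𝒴 and Y_n := g(X_n). Among all stationary k-th order Markov chains on 𝒴, the chain Y^(k) with transition matrix Q_{i_1,...,i_k→j} = p_{Y_{k+1}|Y_1^k}(j | i_1,...,i_k) minimizes the Kullback-Leibler divergence rate D̄(Y‖·), and for this choice D̄(Y‖Y^(k)) = H(Y_{k+1} | Y_1^k) − H̄(Y). -/
open Filter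

/-!
For `n ≥ k + 1` the log-likelihood of a path under a `(k+1)`-th order Markov chain `(ρ, R)`
splits into the initial term `log ρ(y_1^{k+1})` and `n - k - 1` transition terms
`log R(y_t^{t+k}, y_{t+k+1})`. By stationarity of `Y` every transition term has the same
expectation, so `(1/n) D(Y_1^n ‖ (ρ, R))` tends to the cross entropy
`-E log R(Y_1^{k+1}, Y_{k+2})` minus the entropy rate `H̄(Y)` (the latter by Cesàro averaging of
the entropy increments). Gibbs' inequality bounds this cross entropy below by
`H(Y_{k+2} | Y_1^{k+1})`, with equality for the conditional kernel `R = Q`.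
-/

open Finset

section TupleSums

variable {α : Type*} [Fintype α]

theorem Fin.sum_univ_pi_snoc {n : ℕ} (F : (Fin (n + 1) → α) → ℝ) :
    ∑ x, F x = ∑ x : Fin n → α, ∑ a, F (Fin.snoc x a) := by
  rw [← (Fin.snocEquiv fun _ => α).sum_comp, Fintype.sum_prod_type, Finset.sum_comm]
  rfl

theorem Fin.sum_univ_pi_cons {n : ℕ} (F : (Fin (n + 1) → α) → ℝ) :
    ∑ x, F x = ∑ x : Fin n → α, ∑ a, F (Fin.cons a x) := by
  rw [← (Fin.consEquiv fun _ => α).sum_comp, Fintype.sum_prod_type, Finset.sum_comm]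
  rfl

end TupleSums

section MarkovPaths

variable {𝒳 : Type*}

theorem xPath_succ (π : 𝒳 → ℝ) (P : Matrix 𝒳 𝒳 ℝ) (m : ℕ) (x : Fin (m + 1) → 𝒳) :
    xPath π P (m + 1) x = π (x 0) * ∏ i : Fin m, P (x i.castSucc) (x i.succ) := by
  rw [xPath, dif_pos m.succ_pos, Fin.prod_univ_castSucc, dif_neg (by simp)]
  simp only [Fin.val_castSucc, add_lt_add_iff_right, Fin.is_lt, dite_true, mul_one]
  rfl

theorem xPath_nonneg {π : 𝒳 → ℝ} {P : Matrix 𝒳 𝒳 ℝ} (hπ : ∀ x, 0 ≤ π x)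
    (hP : ∀ i j, 0 ≤ P i j) (n : ℕ) (x : Fin n → 𝒳) : 0 ≤ xPath π P n x := by
  cases n with
  | zero => simp [xPath]
  | succ m => rw [xPath_succ]; exact mul_nonneg (hπ _) (prod_nonneg fun i _ => hP _ _)

theorem sum_xPath_snoc [Fintype 𝒳] {π : 𝒳 → ℝ} {P : Matrix 𝒳 𝒳 ℝ} (hπ : ∑ x, π x = 1)
    (hP : ∀ i, ∑ j, P i j = 1) (n : ℕ) (x : Fin n → 𝒳) :
    ∑ a, xPath π P (n + 1) (Fin.snoc x a) = xPath π P n x := by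
  cases n with
  | zero => simpa [xPath_succ, xPath, Fin.snoc] using hπ
  | succ m =>
    simp [xPath_succ, Fin.prod_univ_castSucc, Fin.succ_castSucc, -Fin.castSucc_succ,
      ← Finset.mul_sum, hP]

theorem sum_xPath_cons [Fintype 𝒳] {π : 𝒳 → ℝ} {P : Matrix 𝒳 𝒳 ℝ} (hπ : ∑ x, π x = 1)
    (hπP : ∀ j, ∑ i, π i * P i j = π j) (n : ℕ) (x : Fin n → 𝒳) :
    ∑ a, xPath π P (n + 1) (Fin.cons a x) = xPath π P n x := by
  cases n with
  | zero => simpa [xPath_succ, xPath] using hπ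
  | succ m => simp [xPath_succ, Fin.prod_univ_succ, ← mul_assoc, ← Finset.sum_mul, hπP]

end MarkovPaths

section Lumping

variable {𝒳 𝒴 : Type*} [Fintype 𝒳] [Fintype 𝒴] [DecidableEq 𝒴] (g : 𝒳 → 𝒴)

theorem sum_fiber_snoc {n : ℕ} (w : (Fin (n + 1) → 𝒳) → ℝ) (y : Fin n → 𝒴) :
    ∑ j, ∑ x, (if ∀ i, g (x i) = Fin.snoc (α := fun _ => 𝒴) y j i then w x else 0) =
      ∑ x, if ∀ i, g (x i) = y i then ∑ a, w (Fin.snoc x a) else 0 := by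
  have hsplit : ∀ j x a, (∀ i, g (Fin.snoc (α := fun _ => 𝒳) x a i) =
      Fin.snoc (α := fun _ => 𝒴) y j i) ↔ (∀ i, g (x i) = y i) ∧ g a = j := by
    intro j x a
    simp [Fin.forall_fin_succ', eq_comm]
  simp_rw [Fin.sum_univ_pi_snoc, hsplit, ite_and]
  rw [Finset.sum_comm]
  refine sum_congr rfl fun x _ => ?_
  split_ifs <;> simp [Finset.sum_comm (s := (univ : Finset 𝒴))]

theorem sum_fiber_cons {n : ℕ} (w : (Fin (n + 1) → 𝒳) → ℝ) (y : Fin n → 𝒴) :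
    ∑ j, ∑ x, (if ∀ i, g (x i) = Fin.cons (α := fun _ => 𝒴) j y i then w x else 0) =
      ∑ x, if ∀ i, g (x i) = y i then ∑ a, w (Fin.cons a x) else 0 := by
  have hsplit : ∀ j x a, (∀ i, g (Fin.cons (α := fun _ => 𝒳) a x i) =
      Fin.cons (α := fun _ => 𝒴) j y i) ↔ (∀ i, g (x i) = y i) ∧ g a = j := by
    intro j x a
    simp [Fin.forall_fin_succ, and_comm]
  simp_rw [Fin.sum_univ_pi_cons, hsplit, ite_and]
  rw [Finset.sum_comm]
  refine sum_congr rfl fun x _ => ?_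
  split_ifs <;> simp [Finset.sum_comm (s := (univ : Finset 𝒴))]

end Lumping

/-- `p n` is the law of `(Y_1, …, Y_n)`; `sum_snoc` is Kolmogorov consistency and `sum_cons`
stationarity. -/
structure IsStationaryLaw {α : Type*} [Fintype α] (p : ∀ n, (Fin n → α) → ℝ) : Prop where
  nonneg : ∀ n y, 0 ≤ p n y
  sum_snoc : ∀ n y, ∑ a, p (n + 1) (Fin.snoc y a) = p n y
  sum_cons : ∀ n y, ∑ a, p (n + 1) (Fin.cons a y) = p n y

theorem isStationaryLaw_yPath {𝒳 𝒴 : Type*} [Fintype 𝒳] [Fintype 𝒴] [DecidableEq 𝒴]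
    {μ : 𝒳 → ℝ} {P : Matrix 𝒳 𝒳 ℝ} (hP0 : ∀ i j, 0 ≤ P i j) (hP1 : ∀ i, ∑ j, P i j = 1)
    (hμ0 : ∀ x, 0 ≤ μ x) (hμ1 : ∑ x, μ x = 1) (hμ2 : ∀ j, ∑ i, μ i * P i j = μ j)
    (g : 𝒳 → 𝒴) : IsStationaryLaw (yPath μ P g) where
  nonneg n y := sum_nonneg fun x _ => by split_ifs <;> simp [xPath_nonneg hμ0 hP0]
  sum_snoc n y := by simp only [yPath, sum_fiber_snoc, sum_xPath_snoc hμ1 hP1]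
  sum_cons n y := by simp only [yPath, sum_fiber_cons, sum_xPath_cons hμ1 hμ2]

section Windows

variable {α : Type*}

def window (s : ℕ) {m n : ℕ} (h : s + m ≤ n) (y : Fin n → α) : Fin m → α :=
  fun i => y ⟨s + i, by omega⟩

theorem window_zero_self {n : ℕ} (y : Fin n → α) : window 0 (Nat.zero_add n).le y = y := by
  ext i
  simp [window]

theorem window_init {s m n : ℕ} (h : s + m ≤ n) (y : Fin (n + 1) → α) :
    window s (h.trans n.le_succ) y = window s h (Fin.init y) := rfl

theorem window_tail {s m n : ℕ} (h : s + m ≤ n) (y : Fin (n + 1) → α) :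
    window (s + 1) (by omega) y = window s h (Fin.tail y) := by
  ext i
  simp only [window, Fin.tail]
  congr 1
  ext
  simp
  omega

theorem mkvPath_add [Fintype α] [DecidableEq α] {K : ℕ} (ρ : (Fin K → α) → ℝ)
    (R : (Fin K → α) → α → ℝ) (r : ℕ) (y : Fin (K + r) → α) :
    mkvPath ρ R (K + r) y = ρ (window 0 (by omega) y) *
      ∏ t : Fin r, R (Fin.init (window t (by omega) y)) (window t (by omega) y (Fin.last K)) := by
  rw [mkvPath, dif_pos (Nat.le_add_right K r), Fin.prod_univ_add]
  simp only [Fin.val_castAdd, Fin.val_natAdd, Fin.is_lt, not_le.mpr, dite_false, prod_const_one,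
    one_mul, le_add_iff_nonneg_right, zero_le, dite_true]
  congr 1
  · congr 1
    ext i
    simp [window]
  · refine prod_congr rfl fun t _ => ?_
    congr 1
    · ext i
      simp [window, Fin.init]
    · simp only [window, Fin.val_last]
      congr 1
      ext
      simp [add_comm]

theorem mkvPath_succ [Fintype α] [DecidableEq α] {K : ℕ} (ρ : (Fin K → α) → ℝ)
    (R : (Fin K → α) → α → ℝ) (w : Fin (K + 1) → α) :
    mkvPath ρ R (K + 1) w = ρ (Fin.init w) * R (Fin.init w) (w (Fin.last K)) := by
  have hinit : window 0 (by omega) w = Fin.init w :=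
    (window_init (Nat.zero_add K).le w).trans (window_zero_self _)
  simp [mkvPath_add ρ R 1 w, window_zero_self, hinit]

end Windows

section Entropy

variable {β : Type*} [Fintype β]

noncomputable def klDivPMF (p q : β → ℝ) : ℝ :=
  ∑ b, p b * Real.log (p b / q b)

/-- The cross entropy `-E log R(Y_1^K, Y_{K+1})` of the kernel `R` against a process whose
`(K+1)`-dimensional law is `q`. -/
noncomputable def transCrossEnt {K : ℕ} (q : (Fin (K + 1) → β) → ℝ)
    (R : (Fin K → β) → β → ℝ) : ℝ :=
  -∑ w, q w * Real.log (R (Fin.init w) (w (Fin.last K)))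

theorem klDivPMF_eq_neg_entPMF_sub {p q : β → ℝ} (hq : ∀ b, p b ≠ 0 → q b ≠ 0) :
    klDivPMF p q = -entPMF p - ∑ b, p b * Real.log (q b) := by
  rw [klDivPMF, entPMF, ← sum_neg_distrib, ← sum_sub_distrib]
  refine sum_congr rfl fun b _ => ?_
  by_cases hb : p b = 0
  · simp [hb]
  · rw [Real.log_div hb (hq b hb), Real.negMulLog]
    ring

theorem sum_mul_log_le_sum_mul_log_div_sum {a r : β → ℝ} (ha : ∀ j, 0 ≤ a j)
    (hr : ∀ j, 0 ≤ r j) (hr1 : ∑ j, r j = 1) (hac : ∀ j, a j ≠ 0 → r j ≠ 0) :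
    ∑ j, a j * Real.log (r j) ≤ ∑ j, a j * Real.log (a j / ∑ i, a i) := by
  set c := ∑ i, a i
  have hc : 0 ≤ c := sum_nonneg fun i _ => ha i
  -- `log x ≤ x - 1` at `x = c r_j / a_j`, summed over `j`
  have hterm : ∀ j, a j * Real.log (r j) - a j * Real.log (a j / c) ≤ c * r j - a j := by
    intro j
    by_cases haj : a j = 0
    · simp [haj, mul_nonneg hc (hr j)]
    have hpos : 0 < a j := (ha j).lt_of_ne' haj
    have hcpos : 0 < c := hpos.trans_le (single_le_sum (fun i _ => ha i) (mem_univ j))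
    have hrpos : 0 < r j := (hr j).lt_of_ne' (hac j haj)
    have hlog := Real.log_le_sub_one_of_pos (show 0 < c * r j / a j by positivity)
    rw [Real.log_div (by positivity) haj, Real.log_mul hcpos.ne' hrpos.ne'] at hlog
    rw [Real.log_div haj hcpos.ne']
    have := mul_le_mul_of_nonneg_left hlog hpos.le
    field_simp at this
    nlinarith
  have hsum := sum_le_sum fun j (_ : j ∈ univ) => hterm j
  rw [sum_sub_distrib, sum_sub_distrib, ← mul_sum, hr1, mul_one, sub_self] at hsum
  linarith

end Entropy

theorem tendsto_inv_mul_of_tendsto_sub {u : ℕ → ℝ} {l : ℝ}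
    (h : Tendsto (fun n => u (n + 1) - u n) atTop (nhds l)) :
    Tendsto (fun n : ℕ => (n : ℝ)⁻¹ * u n) atTop (nhds l) := by
  have hlim := h.cesaro.add ((tendsto_inv_atTop_nhds_zero_nat (𝕜 := ℝ)).mul_const (u 0))
  rw [zero_mul, add_zero] at hlim
  refine hlim.congr fun n => ?_
  rw [sum_range_sub (fun i => u i), ← mul_add, sub_add_cancel]

noncomputable def condTrans {α : Type*} (p : ∀ n, (Fin n → α) → ℝ) (K : ℕ) (v : Fin K → α)
    (j : α) : ℝ :=
  p (K + 1) (Fin.snoc v j) / p K v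

namespace IsStationaryLaw

variable {α : Type*} [Fintype α] {p : ∀ n, (Fin n → α) → ℝ}

theorem sum_mul_comp_init (hp : IsStationaryLaw p) {n : ℕ} (f : (Fin n → α) → ℝ) :
    ∑ y, p (n + 1) y * f (Fin.init y) = ∑ y, p n y * f y := by
  simp [Fin.sum_univ_pi_snoc, ← sum_mul, hp.sum_snoc]

theorem sum_mul_comp_tail (hp : IsStationaryLaw p) {n : ℕ} (f : (Fin n → α) → ℝ) :
    ∑ y, p (n + 1) y * f (Fin.tail y) = ∑ y, p n y * f y := by
  simp [Fin.sum_univ_pi_cons, ← sum_mul, hp.sum_cons]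

theorem sum_mul_comp_window (hp : IsStationaryLaw p) {s m n : ℕ} (h : s + m ≤ n)
    (f : (Fin m → α) → ℝ) : ∑ y, p n y * f (window s h y) = ∑ w, p m w * f w := by
  induction n generalizing s with
  | zero =>
    obtain ⟨rfl, rfl⟩ : s = 0 ∧ m = 0 := by omega
    simp [window_zero_self]
  | succ n ih =>
    by_cases hlt : s + m ≤ n
    · simp_rw [window_init hlt]
      exact (hp.sum_mul_comp_init _).trans (ih hlt)
    · cases s with
      | zero =>
        obtain rfl : m = n + 1 := by omega
        simp [window_zero_self]
      | succ s =>
        have hs : s + m ≤ n := by omega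
        simp_rw [window_tail hs]
        exact (hp.sum_mul_comp_tail _).trans (ih hs)

theorem window_ne_zero (hp : IsStationaryLaw p) {s m n : ℕ} (h : s + m ≤ n) {y : Fin n → α}
    (hy : p n y ≠ 0) : p m (window s h y) ≠ 0 := by
  classical
  have hsum := hp.sum_mul_comp_window h fun w => if w = window s h y then 1 else 0
  simp only [mul_ite, mul_one, mul_zero, sum_ite_eq', mem_univ, if_true] at hsum
  rw [← hsum]
  refine ne_of_gt ((lt_of_le_of_ne (hp.nonneg n y) (Ne.symm hy)).trans_le ?_)
  refine single_le_sum (f := fun y' => if window s h y' = window s h y then p n y' else 0)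
    (fun y' _ => ?_) (mem_univ y) |>.trans_eq' (by simp)
  split_ifs <;> simp [hp.nonneg]

theorem init_ne_zero (hp : IsStationaryLaw p) {n : ℕ} {w : Fin (n + 1) → α}
    (hw : p (n + 1) w ≠ 0) : p n (Fin.init w) ≠ 0 := by
  have h := hp.window_ne_zero ((Nat.zero_add n).le.trans n.le_succ) hw
  rwa [window_init (Nat.zero_add n).le, window_zero_self] at h

theorem condEntPMF_eq_transCrossEnt (hp : IsStationaryLaw p) (K : ℕ) :
    condEntPMF (fun q : α × (Fin K → α) => p (K + 1) (Fin.snoc q.2 q.1)) =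
      transCrossEnt (p (K + 1)) (condTrans p K) := by
  have hjoint : entPMF (fun q : α × (Fin K → α) => p (K + 1) (Fin.snoc q.2 q.1)) =
      entPMF (p (K + 1)) := by
    rw [entPMF, entPMF, Fintype.sum_prod_type_right, Fin.sum_univ_pi_snoc]
  have hterm : ∀ w, p (K + 1) w * Real.log (p (K + 1) w / p K (Fin.init w)) =
      p (K + 1) w * Real.log (p (K + 1) w) - p (K + 1) w * Real.log (p K (Fin.init w)) := by
    intro w
    by_cases hw : p (K + 1) w = 0
    · simp [hw]
    rw [Real.log_div hw (hp.init_ne_zero hw)]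
    ring
  unfold condEntPMF margSnd
  simp_rw [hjoint, hp.sum_snoc]
  simp only [transCrossEnt, condTrans, Fin.snoc_init_self, hterm, sum_sub_distrib,
    hp.sum_mul_comp_init fun v => Real.log (p K v), entPMF, Real.negMulLog, neg_mul,
    sum_neg_distrib]
  ring

theorem condEntPMF_le_transCrossEnt (hp : IsStationaryLaw p) {K : ℕ} {R : (Fin K → α) → α → ℝ}
    (hR0 : ∀ v j, 0 ≤ R v j) (hR1 : ∀ v, ∑ j, R v j = 1)
    (hac : ∀ w, p (K + 1) w ≠ 0 → R (Fin.init w) (w (Fin.last K)) ≠ 0) :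
    condEntPMF (fun q : α × (Fin K → α) => p (K + 1) (Fin.snoc q.2 q.1)) ≤
      transCrossEnt (p (K + 1)) R := by
  rw [hp.condEntPMF_eq_transCrossEnt, transCrossEnt, transCrossEnt, neg_le_neg_iff,
    Fin.sum_univ_pi_snoc, Fin.sum_univ_pi_snoc]
  refine sum_le_sum fun v _ => ?_
  have hgibbs := sum_mul_log_le_sum_mul_log_div_sum (fun j => hp.nonneg _ (Fin.snoc v j))
    (hR0 v) (hR1 v) fun j hj => by simpa using hac _ hj
  simpa [condTrans, hp.sum_snoc] using hgibbs

theorem sum_mul_log_mkvPath [DecidableEq α] (hp : IsStationaryLaw p) {K : ℕ}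
    {ρ : (Fin K → α) → ℝ} {R : (Fin K → α) → α → ℝ} (r : ℕ)
    (hac : ∀ y, p (K + r) y ≠ 0 → mkvPath ρ R (K + r) y ≠ 0) :
    ∑ y, p (K + r) y * Real.log (mkvPath ρ R (K + r) y) =
      ∑ v, p K v * Real.log (ρ v) - r * transCrossEnt (p (K + 1)) R := by
  have hterm : ∀ y, p (K + r) y * Real.log (mkvPath ρ R (K + r) y) =
      p (K + r) y * Real.log (ρ (window 0 (by omega) y)) + ∑ t : Fin r, p (K + r) y *
        Real.log (R (Fin.init (window t (by omega) y)) (window t (by omega) y (Fin.last K))) := by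
    intro y
    by_cases hy : p (K + r) y = 0
    · simp [hy]
    have hne := hac y hy
    rw [mkvPath_add] at hne ⊢
    obtain ⟨hρ, hR⟩ := mul_ne_zero_iff.mp hne
    rw [Real.log_mul hρ hR, Real.log_prod fun t _ => prod_ne_zero_iff.mp hR t (mem_univ t),
      mul_add, mul_sum]
  simp_rw [hterm]
  rw [sum_add_distrib, sum_comm, hp.sum_mul_comp_window _ fun v => Real.log (ρ v)]
  simp_rw [hp.sum_mul_comp_window _ fun w => Real.log (R (Fin.init w) (w (Fin.last K)))]
  simp [transCrossEnt]

theorem tendsto_klDivPMF_mkvPath [DecidableEq α] (hp : IsStationaryLaw p) {h : ℝ}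
    (hrate : Tendsto (fun n => entPMF (p (n + 1)) - entPMF (p n)) atTop (nhds h))
    {K : ℕ} {ρ : (Fin K → α) → ℝ} {R : (Fin K → α) → α → ℝ}
    (hac : ∀ r y, p (K + r) y ≠ 0 → mkvPath ρ R (K + r) y ≠ 0) :
    Tendsto (fun n : ℕ => (n : ℝ)⁻¹ * klDivPMF (p n) (mkvPath ρ R n)) atTop
      (nhds (transCrossEnt (p (K + 1)) R - h)) := by
  set C := transCrossEnt (p (K + 1)) R
  set B := ∑ v, p K v * Real.log (ρ v) + K * C
  have hent := tendsto_inv_mul_of_tendsto_sub (u := fun n => entPMF (p n)) hrate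
  have hlim : Tendsto (fun n : ℕ => -((n : ℝ)⁻¹ * entPMF (p n)) - (n : ℝ)⁻¹ * B + C) atTop
      (nhds (-h - 0 * B + C)) :=
    (hent.neg.sub ((tendsto_inv_atTop_nhds_zero_nat (𝕜 := ℝ)).mul_const B)).add_const C
  rw [zero_mul, sub_zero, neg_add_eq_sub] at hlim
  refine hlim.congr' ?_
  filter_upwards [eventually_ge_atTop K, eventually_gt_atTop 0] with n hKn hn
  obtain ⟨r, rfl⟩ := Nat.exists_eq_add_of_le hKn
  rw [klDivPMF_eq_neg_entPMF_sub (hac r), hp.sum_mul_log_mkvPath r (hac r)]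
  field_simp
  push_cast
  ring

theorem mkvPath_condTrans_ne_zero [DecidableEq α] (hp : IsStationaryLaw p) {K r : ℕ}
    {y : Fin (K + r) → α} (hy : p (K + r) y ≠ 0) : mkvPath (p K) (condTrans p K) (K + r) y ≠ 0 := by
  rw [mkvPath_add]
  refine mul_ne_zero (hp.window_ne_zero _ hy) (prod_ne_zero_iff.mpr fun t _ => ?_)
  have hw := hp.window_ne_zero (by omega : t + (K + 1) ≤ K + r) hy
  rw [condTrans, Fin.snoc_init_self]
  exact div_ne_zero hw (hp.init_ne_zero hw)

end IsStationaryLaw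
theorem stmt5_general {𝒳 𝒴 : Type*} [Fintype 𝒳] [Fintype 𝒴] [DecidableEq 𝒴]
    (P : Matrix 𝒳 𝒳 ℝ) (hP0 : ∀ i j, 0 ≤ P i j) (hP1 : ∀ i, ∑ j : 𝒳, P i j = 1)
    (μ : 𝒳 → ℝ) (hμ0 : ∀ x, 0 ≤ μ x) (hμ1 : ∑ x : 𝒳, μ x = 1)
    (hμ2 : ∀ j, ∑ i : 𝒳, μ i * P i j = μ j)
    (g : 𝒳 → 𝒴) (k : ℕ) (hbar : ℝ)
    (hrate : Tendsto (fun n => entPMF (yPath μ P g (n + 1)) - entPMF (yPath μ P g n))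
      atTop (nhds hbar)) :
    -- the optimal approximation achieves D̄(Y‖Y^{(k+1)}) = H(Y_{k+2}|Y_1^{k+1}) − H̄(Y):
    Tendsto (fun n : ℕ => (n : ℝ)⁻¹ *
        ∑ y : Fin n → 𝒴, yPath μ P g n y *
          Real.log (yPath μ P g n y /
            mkvPath (yPath μ P g (k + 1))
              (fun v j => yPath μ P g (k + 2) (Fin.snoc v j) / yPath μ P g (k + 1) v) n y))
      atTop
      (nhds (condEntPMF
          (fun q : 𝒴 × (Fin (k + 1) → 𝒴) => yPath μ P g (k + 2) (Fin.snoc q.2 q.1)) - hbar)) ∧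
    -- and it is optimal: any other stationary (k+1)-th order Markov chain (ρ, R) on 𝒴 whose
    -- KL divergence rate from Y exists has a larger divergence rate:
    (∀ (ρ : (Fin (k + 1) → 𝒴) → ℝ) (R : (Fin (k + 1) → 𝒴) → 𝒴 → ℝ),
      (∀ v, 0 ≤ ρ v) → (∑ v : Fin (k + 1) → 𝒴, ρ v = 1) →
      (∀ v j, 0 ≤ R v j) → (∀ v, ∑ j : 𝒴, R v j = 1) →
      (∀ w : Fin (k + 1) → 𝒴,
        ρ w = ∑ a : 𝒴, ρ (Fin.cons a (Fin.init w)) * R (Fin.cons a (Fin.init w)) (w (Fin.last k))) →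
      (∀ n : ℕ, ∀ y : Fin n → 𝒴, mkvPath ρ R n y = 0 → yPath μ P g n y = 0) →
      ∀ d : ℝ,
        Tendsto (fun n : ℕ => (n : ℝ)⁻¹ * ∑ y : Fin n → 𝒴,
            yPath μ P g n y * Real.log (yPath μ P g n y / mkvPath ρ R n y)) atTop (nhds d) →
        condEntPMF
            (fun q : 𝒴 × (Fin (k + 1) → 𝒴) => yPath μ P g (k + 2) (Fin.snoc q.2 q.1)) - hbar
          ≤ d) := by
  have hp := isStationaryLaw_yPath hP0 hP1 hμ0 hμ1 hμ2 g
  refine ⟨?_, fun ρ R _ _ hR0 hR1 _ habs d hd => ?_⟩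
  · rw [hp.condEntPMF_eq_transCrossEnt]
    exact hp.tendsto_klDivPMF_mkvPath hrate fun r y hy => hp.mkvPath_condTrans_ne_zero hy
  · have hlim := hp.tendsto_klDivPMF_mkvPath hrate fun r y hy h0 => hy (habs _ y h0)
    rw [tendsto_nhds_unique hd hlim]
    refine sub_le_sub_right (hp.condEntPMF_le_transCrossEnt hR0 hR1 fun w hw h0 => ?_) hbar
    exact hw (habs _ w (by rw [mkvPath_succ, h0, mul_zero]))

/-- among all stationary `(k+1)`-th order Markov chains on 𝒴, the chain with
transition matrix Q_{i_1..i_{k+1}→j} = p_{Y_{k+2}|Y_1^{k+1}}(j | i_1..i_{k+1}) minimizes the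
Kullback-Leibler divergence rate D̄(Y‖·) from the projection Y of X, and for this choice
D̄(Y‖Y^{(k+1)}) = H(Y_{k+2} | Y_1^{k+1}) − H̄(Y).  (Orders are written as `k+1` ≥ 1.) -/
theorem stmt5 {𝒳 𝒴 : Type*} [Fintype 𝒳] [DecidableEq 𝒳] [Fintype 𝒴] [DecidableEq 𝒴]
    (P : Matrix 𝒳 𝒳 ℝ) (hP0 : ∀ i j, 0 ≤ P i j) (hP1 : ∀ i, ∑ j : 𝒳, P i j = 1)
    (hprim : PrimitiveMatrix P)
    (μ : 𝒳 → ℝ) (hμ0 : ∀ x, 0 ≤ μ x) (hμ1 : ∑ x : 𝒳, μ x = 1)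
    (hμ2 : ∀ j, ∑ i : 𝒳, μ i * P i j = μ j)
    (g : 𝒳 → 𝒴) (k : ℕ) (hbar : ℝ)
    (hrate : Tendsto (fun n => entPMF (yPath μ P g (n + 1)) - entPMF (yPath μ P g n))
      atTop (nhds hbar)) :
    -- the optimal approximation achieves D̄(Y‖Y^{(k+1)}) = H(Y_{k+2}|Y_1^{k+1}) − H̄(Y):
    Tendsto (fun n : ℕ => (n : ℝ)⁻¹ *
        ∑ y : Fin n → 𝒴, yPath μ P g n y *
          Real.log (yPath μ P g n y /
            mkvPath (yPath μ P g (k + 1))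
              (fun v j => yPath μ P g (k + 2) (Fin.snoc v j) / yPath μ P g (k + 1) v) n y))
      atTop
      (nhds (condEntPMF
          (fun q : 𝒴 × (Fin (k + 1) → 𝒴) => yPath μ P g (k + 2) (Fin.snoc q.2 q.1)) - hbar)) ∧
    -- and it is optimal: any other stationary (k+1)-th order Markov chain (ρ, R) on 𝒴 whose
    -- KL divergence rate from Y exists has a larger divergence rate:
    (∀ (ρ : (Fin (k + 1) → 𝒴) → ℝ) (R : (Fin (k + 1) → 𝒴) → 𝒴 → ℝ),
      (∀ v, 0 ≤ ρ v) → (∑ v : Fin (k + 1) → 𝒴, ρ v = 1) →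
      (∀ v j, 0 ≤ R v j) → (∀ v, ∑ j : 𝒴, R v j = 1) →
      (∀ w : Fin (k + 1) → 𝒴,
        ρ w = ∑ a : 𝒴, ρ (Fin.cons a (Fin.init w)) * R (Fin.cons a (Fin.init w)) (w (Fin.last k))) →
      (∀ n : ℕ, ∀ y : Fin n → 𝒴, mkvPath ρ R n y = 0 → yPath μ P g n y = 0) →
      ∀ d : ℝ,
        Tendsto (fun n : ℕ => (n : ℝ)⁻¹ * ∑ y : Fin n → 𝒴,
            yPath μ P g n y * Real.log (yPath μ P g n y / mkvPath ρ R n y)) atTop (nhds d) →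
        condEntPMF
            (fun q : 𝒴 × (Fin (k + 1) → 𝒴) => yPath μ P g (k + 2) (Fin.snoc q.2 q.1)) - hbar
          ≤ d) :=
  stmt5_general P hP0 hP1 μ hμ0 hμ1 hμ2 g k hbar hrate
end

section
/- Let X be a stationary process on a finite alphabet 𝒳, let g: 𝒳 → 𝒴 and Y_n := g(X_n). Then H(Y_1) ≤ H(X_1), H̄(Y) ≤ H̄(X), and R̄(Y) ≤ R̄(X), where H̄ denotes the entropy rate and R̄ the redundancy rate. -/
open MeasureTheory Filter

section Processes

variable {Ω : Type*} [MeasurableSpace Ω]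

/-- The segment (Z_m, ..., Z_{m+n-1}) of a discrete-time process (0-based indexing, so that
`procSeg Z 0 n` is the block Z_1^n of the paper). -/
def procSeg {𝒵 : Type*} (Z : ℕ → Ω → 𝒵) (m n : ℕ) : Ω → Fin n → 𝒵 :=
  fun ω i => Z (m + i.val) ω

/-- The probability that the observable `W` takes the value `a`. -/
noncomputable def prOf {α : Type*} (μ : Measure Ω) (W : Ω → α) (a : α) : ℝ :=
  (μ (W ⁻¹' {a})).toReal

/-- Shannon entropy of a finitely-valued observable. -/
noncomputable def entOf {α : Type*} [Fintype α] (μ : Measure Ω) (W : Ω → α) : ℝ :=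
  ∑ a : α, Real.negMulLog (prOf μ W a)

/-- Conditional Shannon entropy H(A | B). -/
noncomputable def condEntOf {α β : Type*} [Fintype α] [Fintype β] (μ : Measure Ω)
    (A : Ω → α) (B : Ω → β) : ℝ :=
  entOf μ (fun ω => (A ω, B ω)) - entOf μ B

/-- Mutual information I(A ; B). -/
noncomputable def mutInfOf {α β : Type*} [Fintype α] [Fintype β] (μ : Measure Ω)
    (A : Ω → α) (B : Ω → β) : ℝ :=
  entOf μ A + entOf μ B - entOf μ (fun ω => (A ω, B ω))

/-- A process with finite alphabet is stationary iff all its finite-dimensional distributions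
are invariant under the time shift. -/
def StationaryProc {𝒵 : Type*} (μ : Measure Ω) (Z : ℕ → Ω → 𝒵) : Prop :=
  ∀ n : ℕ, ∀ z : Fin n → 𝒵,
    μ {ω | ∀ i : Fin n, Z i.val ω = z i} = μ {ω | ∀ i : Fin n, Z (i.val + 1) ω = z i}

/-- `Z` is a (time-homogeneous) `k`-th order Markov chain with transition matrix `P`:
for every n ≥ k, Z_{n+1} is conditionally independent of Z_1^{n-k} given Z_{n-k+1}^n, and the
conditional probabilities are given by `P` (time-homogeneity). -/
def IsMarkovOrder {𝒵 : Type*} (μ : Measure Ω) (Z : ℕ → Ω → 𝒵) (k : ℕ)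
    (P : (Fin k → 𝒵) → 𝒵 → ℝ) : Prop :=
  ∀ n : ℕ, ∀ hn : k ≤ n, ∀ z : Fin n → 𝒵, ∀ j : 𝒵,
    prOf μ (procSeg Z 0 (n + 1)) (Fin.snoc z j) =
      prOf μ (procSeg Z 0 n) z *
        P (fun i : Fin k => z ⟨n - k + i.val, by have := i.isLt; omega⟩) j

end Processes

section Aux

open Finset

variable {Ω : Type*} [MeasurableSpace Ω] {α β γ : Type*}

lemma prOf_nonneg (μ : Measure Ω) (W : Ω → α) (a : α) : 0 ≤ prOf μ W a :=
  ENNReal.toReal_nonneg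

lemma prOf_mono (μ : Measure Ω) [IsProbabilityMeasure μ] {W : Ω → α} {V : Ω → β}
    {a : α} {b : β} (h : W ⁻¹' {a} ⊆ V ⁻¹' {b}) : prOf μ W a ≤ prOf μ V b :=
  ENNReal.toReal_mono (measure_ne_top μ _) (measure_mono h)

lemma prOf_comp_eq_sum [Fintype α] [DecidableEq γ] (μ : Measure Ω) [IsProbabilityMeasure μ]
    (W : Ω → α) (hW : ∀ a, MeasurableSet (W ⁻¹' {a})) (h : α → γ) (d : γ) :
    prOf μ (fun ω => h (W ω)) d = ∑ a ∈ univ.filter (fun a => h a = d), prOf μ W a := by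
  have hset : (fun ω => h (W ω)) ⁻¹' {d}
      = ⋃ a ∈ univ.filter (fun a => h a = d), W ⁻¹' {a} := by
    ext ω
    simp only [Set.mem_preimage, Set.mem_singleton_iff, Set.mem_iUnion, mem_filter, mem_univ,
      true_and]
    constructor
    · intro hd; exact ⟨W ω, hd, rfl⟩
    · rintro ⟨a, ha, h2⟩; rw [h2]; exact ha
  rw [prOf, hset, measure_biUnion_finset ?_ (fun a _ => hW a),
    ENNReal.toReal_sum (fun a _ => measure_ne_top μ _)]
  · rfl
  · intro a _ b _ hab
    exact Set.disjoint_left.2 fun ω h1 h2 => hab (by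
      simp only [Set.mem_preimage, Set.mem_singleton_iff] at h1 h2
      rw [← h1, ← h2])

lemma sum_prOf [Fintype α] [DecidableEq α] (μ : Measure Ω) [IsProbabilityMeasure μ]
    (W : Ω → α) (hW : ∀ a, MeasurableSet (W ⁻¹' {a})) : ∑ a, prOf μ W a = 1 := by
  have h1 := prOf_comp_eq_sum μ W hW (fun _ => (0 : Fin 1)) 0
  have h2 : prOf μ (fun _ω : Ω => (0 : Fin 1)) 0 = 1 := by
    have : (fun _ω : Ω => (0 : Fin 1)) ⁻¹' {0} = Set.univ := by
      ext ω; simp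
    simp [prOf, this]
  rw [h2] at h1
  have h3 : (univ.filter (fun _a : α => (0 : Fin 1) = 0)) = univ := by
    ext a; simp
  rw [h3] at h1
  exact h1.symm

lemma entOf_eq_sum [Fintype α] (μ : Measure Ω) (W : Ω → α) :
    entOf μ W = ∑ a : α, -(prOf μ W a * Real.log (prOf μ W a)) := by
  simp [entOf, Real.negMulLog, neg_mul]

lemma entOf_comp_eq_sum [Fintype α] [Fintype γ] [DecidableEq γ] (μ : Measure Ω)
    [IsProbabilityMeasure μ] (W : Ω → α) (hW : ∀ a, MeasurableSet (W ⁻¹' {a})) (h : α → γ) :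
    entOf μ (fun ω => h (W ω)) =
      ∑ a : α, -(prOf μ W a * Real.log (prOf μ (fun ω => h (W ω)) (h a))) := by
  classical
  rw [entOf,
    ← Finset.sum_fiberwise Finset.univ h
      (fun a => -(prOf μ W a * Real.log (prOf μ (fun ω => h (W ω)) (h a))))]
  refine Finset.sum_congr rfl fun d _ => ?_
  have hrw : ∀ a ∈ univ.filter (fun a => h a = d),
      -(prOf μ W a * Real.log (prOf μ (fun ω => h (W ω)) (h a)))
        = -(prOf μ W a * Real.log (prOf μ (fun ω => h (W ω)) d)) := by
    intro a ha; rw [(Finset.mem_filter.1 ha).2]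
  rw [Finset.sum_congr rfl hrw, Finset.sum_neg_distrib, ← Finset.sum_mul,
    ← prOf_comp_eq_sum μ W hW h d, Real.negMulLog, neg_mul]

lemma entOf_comp_le [Fintype α] [Fintype γ] (μ : Measure Ω) [IsProbabilityMeasure μ]
    (W : Ω → α) (hW : ∀ a, MeasurableSet (W ⁻¹' {a})) (h : α → γ) :
    entOf μ (fun ω => h (W ω)) ≤ entOf μ W := by
  classical
  rw [entOf_comp_eq_sum μ W hW h, entOf_eq_sum]
  refine Finset.sum_le_sum fun a _ => ?_
  rcases eq_or_lt_of_le (prOf_nonneg μ W a) with h0 | h0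
  · simp [← h0]
  · have hle : prOf μ W a ≤ prOf μ (fun ω => h (W ω)) (h a) := by
      refine prOf_mono μ fun ω hω => ?_
      simp only [Set.mem_preimage, Set.mem_singleton_iff] at hω ⊢
      rw [hω]
    have hlog := Real.log_le_log h0 hle
    have := mul_le_mul_of_nonneg_left hlog h0.le
    linarith

lemma entOf_comp_inj [Fintype α] [Fintype γ] (μ : Measure Ω) (W : Ω → α) {e : α → γ}
    (he : Function.Injective e) : entOf μ (fun ω => e (W ω)) = entOf μ W := by
  classical
  rw [entOf, entOf,
    ← Finset.sum_subset (Finset.subset_univ (Finset.image e Finset.univ)) ?_]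
  · rw [Finset.sum_image (fun a _ b _ hab => he hab)]
    refine Finset.sum_congr rfl fun a _ => ?_
    have hpre : (fun ω => e (W ω)) ⁻¹' {e a} = W ⁻¹' {a} := by
      ext ω; simp [he.eq_iff]
    simp only [prOf, hpre]
  · intro d _ hd
    have hempty : (fun ω => e (W ω)) ⁻¹' {d} = ∅ := by
      ext ω
      simp only [Set.mem_preimage, Set.mem_singleton_iff, Set.mem_empty_iff_false, iff_false]
      intro hc
      exact hd (Finset.mem_image.2 ⟨W ω, Finset.mem_univ _, hc⟩)
    simp [prOf, hempty]

lemma gibbs_aux {ι : Type*} (s : Finset ι) (p q : ι → ℝ) (hp : ∀ i ∈ s, 0 ≤ p i)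
    (hq : ∀ i ∈ s, 0 ≤ q i) (hpq : ∀ i ∈ s, p i ≠ 0 → 0 < q i) :
    ∑ i ∈ s, p i * Real.log (q i / p i) ≤ ∑ i ∈ s, (q i - p i) := by
  refine Finset.sum_le_sum fun i hi => ?_
  rcases eq_or_lt_of_le (hp i hi) with h0 | h0
  · simp only [← h0, zero_mul, sub_zero]
    exact hq i hi
  · have hqi := hpq i hi h0.ne'
    have hdiv : 0 < q i / p i := div_pos hqi h0
    have hlog := Real.log_le_sub_one_of_pos hdiv
    have h2 : p i * Real.log (q i / p i) ≤ p i * (q i / p i - 1) :=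
      mul_le_mul_of_nonneg_left hlog h0.le
    have h3 : p i * (q i / p i - 1) = q i - p i := by field_simp
    linarith

lemma prOf_fst_eq_sum [Fintype γ] [Fintype β] [DecidableEq γ] [DecidableEq β] (μ : Measure Ω)
    [IsProbabilityMeasure μ] (V : Ω → γ × β) (hV : ∀ p, MeasurableSet (V ⁻¹' {p})) (y : γ) :
    prOf μ (fun ω => (V ω).1) y = ∑ b : β, prOf μ V (y, b) := by
  rw [prOf_comp_eq_sum μ V hV Prod.fst y]
  refine Finset.sum_nbij' (fun p => p.2) (fun b => (y, b)) ?_ ?_ ?_ ?_ ?_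
  · intro p _; exact Finset.mem_univ _
  · intro b _; simp
  · intro p hp
    have h1 := (Finset.mem_filter.1 hp).2
    rw [Prod.ext_iff]
    exact ⟨h1.symm, rfl⟩
  · intro b _; rfl
  · intro p hp
    have h1 := (Finset.mem_filter.1 hp).2
    rw [show (y, p.2) = p from Prod.ext_iff.2 ⟨h1.symm, rfl⟩]

set_option maxHeartbeats 1600000 in
lemma entOf_DP [Fintype α] [Fintype β] [Fintype γ] [DecidableEq α] [DecidableEq β] [DecidableEq γ]
    (μ : Measure Ω) [IsProbabilityMeasure μ] (A : Ω → α) (B : Ω → β)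
    (hA : ∀ a, MeasurableSet (A ⁻¹' {a})) (hB : ∀ b, MeasurableSet (B ⁻¹' {b})) (f : α → γ) :
    entOf μ (fun ω => f (A ω)) + entOf μ (fun ω => (A ω, B ω)) ≤
      entOf μ A + entOf μ (fun ω => (f (A ω), B ω)) := by
  classical
  set W : Ω → α × β := fun ω => (A ω, B ω) with hWdef
  have hW : ∀ p, MeasurableSet (W ⁻¹' {p}) := by
    intro p
    have hset : W ⁻¹' {p} = A ⁻¹' {p.1} ∩ B ⁻¹' {p.2} := by
      ext ω; simp [hWdef, Prod.ext_iff]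
    rw [hset]; exact (hA _).inter (hB _)
  have hV : ∀ p : γ × β, MeasurableSet ((fun ω => (f (A ω), B ω)) ⁻¹' {p}) := by
    intro p
    have hset : (fun ω => (f (A ω), B ω)) ⁻¹' {p}
        = (⋃ a ∈ (univ.filter (fun a => f a = p.1) : Finset α), A ⁻¹' {a}) ∩ B ⁻¹' {p.2} := by
      ext ω
      simp only [Set.mem_preimage, Set.mem_singleton_iff, Prod.ext_iff, Set.mem_inter_iff,
        Set.mem_iUnion, mem_filter, mem_univ, true_and]
      constructor
      · rintro ⟨h1, h2⟩; exact ⟨⟨A ω, h1, rfl⟩, h2⟩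
      · rintro ⟨⟨a, ha, h2⟩, h3⟩; exact ⟨by rw [h2]; exact ha, h3⟩
    rw [hset]
    exact ((Set.Finite.measurableSet_biUnion (Set.toFinite _) (fun a _ => hA a))).inter (hB _)
  set P : α × β → ℝ := prOf μ W with hPdef
  set pA : α → ℝ := prOf μ A with hpAdef
  set s : γ → ℝ := prOf μ (fun ω => f (A ω)) with hsdef
  set r : γ × β → ℝ := prOf μ (fun ω => (f (A ω), B ω)) with hrdef
  have e1 : entOf μ A = ∑ ab : α × β, -(P ab * Real.log (pA ab.1)) :=
    entOf_comp_eq_sum μ W hW Prod.fst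
  have e2 : entOf μ (fun ω => f (A ω)) = ∑ ab : α × β, -(P ab * Real.log (s (f ab.1))) :=
    entOf_comp_eq_sum μ W hW (fun ab => f ab.1)
  have e3 : entOf μ (fun ω => (f (A ω), B ω))
      = ∑ ab : α × β, -(P ab * Real.log (r (f ab.1, ab.2))) :=
    entOf_comp_eq_sum μ W hW (fun ab => (f ab.1, ab.2))
  have e4 : entOf μ (fun ω => (A ω, B ω)) = ∑ ab : α × β, -(P ab * Real.log (P ab)) :=
    entOf_eq_sum μ W
  -- marginals and bounds
  have hPle1 : ∀ ab : α × β, P ab ≤ pA ab.1 := by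
    intro ab
    refine prOf_mono μ fun ω hω => ?_
    simp only [Set.mem_preimage, Set.mem_singleton_iff, hWdef] at hω ⊢
    rw [← hω]
  have hPle2 : ∀ ab : α × β, P ab ≤ r (f ab.1, ab.2) := by
    intro ab
    refine prOf_mono μ fun ω hω => ?_
    simp only [Set.mem_preimage, Set.mem_singleton_iff, hWdef, Prod.ext_iff] at hω ⊢
    exact ⟨by rw [hω.1], hω.2⟩
  have hple3 : ∀ a, pA a ≤ s (f a) := by
    intro a
    refine prOf_mono μ fun ω hω => ?_
    simp only [Set.mem_preimage, Set.mem_singleton_iff] at hω ⊢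
    rw [hω]
  have m2 : ∀ y, s y = ∑ b : β, r (y, b) := fun y =>
    prOf_fst_eq_sum μ (fun ω => (f (A ω), B ω)) hV y
  have hTot : ∑ ab : α × β, P ab = 1 := sum_prOf μ W hW
  have hTotA : ∑ a : α, pA a = 1 := sum_prOf μ A hA
  set q : α × β → ℝ := fun ab => pA ab.1 * r (f ab.1, ab.2) / s (f ab.1) with hqdef
  have hqnn : ∀ ab, 0 ≤ q ab := fun ab =>
    div_nonneg (mul_nonneg (prOf_nonneg μ A _) (prOf_nonneg μ _ _)) (prOf_nonneg μ _ _)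
  have hqsum : ∑ ab : α × β, q ab = 1 := by
    rw [Fintype.sum_prod_type]
    have hinner : ∀ a : α, ∑ b : β, q (a, b) = pA a := by
      intro a
      by_cases hs : s (f a) = 0
      · have hpa : pA a = 0 :=
          le_antisymm (hs ▸ hple3 a) (prOf_nonneg μ A a)
        simp [hqdef, hs, hpa]
      · simp only [hqdef]
        rw [← Finset.sum_div, ← Finset.mul_sum, ← m2 (f a), mul_div_assoc, div_self hs, mul_one]
    rw [Finset.sum_congr rfl (fun a _ => hinner a)]
    exact hTotA
  have key : ∀ ab : α × β, P ab * Real.log (q ab / P ab)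
      = P ab * Real.log (pA ab.1) + P ab * Real.log (r (f ab.1, ab.2))
        - P ab * Real.log (s (f ab.1)) - P ab * Real.log (P ab) := by
    intro ab
    by_cases hP : P ab = 0
    · simp [hP]
    · have hPpos : 0 < P ab := lt_of_le_of_ne (prOf_nonneg μ W ab) (Ne.symm hP)
      have hpApos : 0 < pA ab.1 := lt_of_lt_of_le hPpos (hPle1 ab)
      have hrpos : 0 < r (f ab.1, ab.2) := lt_of_lt_of_le hPpos (hPle2 ab)
      have hspos : 0 < s (f ab.1) := lt_of_lt_of_le hpApos (hple3 ab.1)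
      have hqpos : 0 < q ab := div_pos (mul_pos hpApos hrpos) hspos
      rw [Real.log_div hqpos.ne' hP, hqdef]
      rw [Real.log_div (mul_pos hpApos hrpos).ne' hspos.ne',
        Real.log_mul hpApos.ne' hrpos.ne']
      ring
  have hpq : ∀ ab : α × β, P ab ≠ 0 → 0 < q ab := by
    intro ab hP
    have hPpos : 0 < P ab := lt_of_le_of_ne (prOf_nonneg μ W ab) (Ne.symm hP)
    have hpApos : 0 < pA ab.1 := lt_of_lt_of_le hPpos (hPle1 ab)
    have hrpos : 0 < r (f ab.1, ab.2) := lt_of_lt_of_le hPpos (hPle2 ab)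
    have hspos : 0 < s (f ab.1) := lt_of_lt_of_le hpApos (hple3 ab.1)
    exact div_pos (mul_pos hpApos hrpos) hspos
  have hgibbs := gibbs_aux Finset.univ P q (fun ab _ => prOf_nonneg μ W ab)
    (fun ab _ => hqnn ab) (fun ab _ => hpq ab)
  rw [Finset.sum_sub_distrib, hqsum, hTot, sub_self] at hgibbs
  rw [Finset.sum_congr rfl (fun ab _ => key ab)] at hgibbs
  simp only [Finset.sum_sub_distrib, Finset.sum_add_distrib] at hgibbs
  rw [e1, e2, e3, e4]
  simp only [Finset.sum_neg_distrib]
  linarith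

lemma mutInf_comm [Fintype α] [Fintype β] (μ : Measure Ω) (A : Ω → α) (B : Ω → β) :
    mutInfOf μ A B = mutInfOf μ B A := by
  unfold mutInfOf
  have hsw : entOf μ (fun ω => (B ω, A ω)) = entOf μ (fun ω => (A ω, B ω)) :=
    entOf_comp_inj (e := Prod.swap) μ (fun ω => (A ω, B ω)) Prod.swap_injective
  rw [hsw]; ring

lemma mutInf_comp_left_le [Fintype α] [Fintype β] [Fintype γ] [DecidableEq α] [DecidableEq β]
    [DecidableEq γ] (μ : Measure Ω) [IsProbabilityMeasure μ] (A : Ω → α) (B : Ω → β)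
    (hA : ∀ a, MeasurableSet (A ⁻¹' {a})) (hB : ∀ b, MeasurableSet (B ⁻¹' {b})) (f : α → γ) :
    mutInfOf μ (fun ω => f (A ω)) B ≤ mutInfOf μ A B := by
  have := entOf_DP μ A B hA hB f
  unfold mutInfOf
  linarith

lemma mutInf_comp_right_le [Fintype α] [Fintype β] [Fintype γ] [DecidableEq α] [DecidableEq β]
    [DecidableEq γ] (μ : Measure Ω) [IsProbabilityMeasure μ] (A : Ω → α) (B : Ω → β)
    (hA : ∀ a, MeasurableSet (A ⁻¹' {a})) (hB : ∀ b, MeasurableSet (B ⁻¹' {b})) (h : β → γ) :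
    mutInfOf μ A (fun ω => h (B ω)) ≤ mutInfOf μ A B := by
  rw [mutInf_comm μ A (fun ω => h (B ω)), mutInf_comm μ A B]
  exact mutInf_comp_left_le μ B A hB hA h

lemma condEnt_telescope {𝒵 : Type*} [Fintype 𝒵] (μ : Measure Ω) (Z : ℕ → Ω → 𝒵) (n : ℕ) :
    condEntOf μ (Z n) (procSeg Z 0 n) = entOf μ (procSeg Z 0 (n + 1)) - entOf μ (procSeg Z 0 n) := by
  unfold condEntOf
  congr 1
  have hinj : Function.Injective
      (fun p : 𝒵 × (Fin n → 𝒵) => (Fin.snoc p.2 p.1 : Fin (n + 1) → 𝒵)) := by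
    rintro ⟨x, v⟩ ⟨x', v'⟩ hp
    simp only at hp
    have h1 : x = x' := by
      have := congrFun hp (Fin.last n)
      simpa [Fin.snoc_last] using this
    have h2 : v = v' := funext fun i => by
      have := congrFun hp (Fin.castSucc i)
      simpa [Fin.snoc_castSucc] using this
    simp [h1, h2]
  have hcomp : (fun ω => (fun p : 𝒵 × (Fin n → 𝒵) => (Fin.snoc p.2 p.1 : Fin (n + 1) → 𝒵))
      ((fun ω => (Z n ω, procSeg Z 0 n ω)) ω)) = procSeg Z 0 (n + 1) := by
    funext ω
    funext i
    refine Fin.lastCases ?_ (fun j => ?_) i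
    · simp [Fin.snoc_last, procSeg]
    · simp [Fin.snoc_castSucc, procSeg]
  have hent := entOf_comp_inj μ (fun ω => (Z n ω, procSeg Z 0 n ω)) hinj
  rw [hcomp] at hent
  exact hent.symm

lemma entOf_seg_zero {𝒵 : Type*} [Fintype 𝒵] [DecidableEq 𝒵] (μ : Measure Ω)
    [IsProbabilityMeasure μ] (Z : ℕ → Ω → 𝒵) : entOf μ (procSeg Z 0 0) = 0 := by
  rw [entOf, Fintype.sum_unique]
  have huniv : procSeg Z 0 0 ⁻¹' {default} = Set.univ := by
    ext ω
    simp [Subsingleton.elim (procSeg Z 0 0 ω) default]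
  simp [prOf, huniv]

lemma sum_condEnt {𝒵 : Type*} [Fintype 𝒵] [DecidableEq 𝒵] (μ : Measure Ω)
    [IsProbabilityMeasure μ] (Z : ℕ → Ω → 𝒵) (n : ℕ) :
    ∑ k ∈ Finset.range n, condEntOf μ (Z k) (procSeg Z 0 k) = entOf μ (procSeg Z 0 n) := by
  rw [Finset.sum_congr rfl (fun k _ => condEnt_telescope μ Z k),
    Finset.sum_range_sub (fun k => entOf μ (procSeg Z 0 k)) n, entOf_seg_zero μ Z, sub_zero]

end Aux


/-- data processing: for a stationary process `X` on a finite alphabet and the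
projection Y_n = g(X_n) one has H(Y_1) ≤ H(X_1), H̄(Y) ≤ H̄(X) and R̄(Y) ≤ R̄(X), where the
entropy rates H̄ and redundancy rates R̄ are the limits of H(Z_n | Z_1^{n-1}) and
I(Z_n ; Z_1^{n-1}), respectively. -/
theorem stmt6 {Ω : Type*} [MeasurableSpace Ω]
    {𝒳 𝒴 : Type*} [Fintype 𝒳] [DecidableEq 𝒳] [Fintype 𝒴] [DecidableEq 𝒴]
    [MeasurableSpace 𝒳] [MeasurableSingletonClass 𝒳]
    (μ : Measure Ω) [IsProbabilityMeasure μ] (X : ℕ → Ω → 𝒳)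
    (hmeas : ∀ n, Measurable (X n)) (hstat : StationaryProc μ X) (g : 𝒳 → 𝒴)
    (hX hY rX rY : ℝ)
    (hHX : Tendsto (fun n => condEntOf μ (X n) (procSeg X 0 n)) atTop (nhds hX))
    (hHY : Tendsto (fun n => condEntOf μ (fun ω => g (X n ω))
      (procSeg (fun m ω => g (X m ω)) 0 n)) atTop (nhds hY))
    (hRX : Tendsto (fun n => mutInfOf μ (X n) (procSeg X 0 n)) atTop (nhds rX))
    (hRY : Tendsto (fun n => mutInfOf μ (fun ω => g (X n ω))
      (procSeg (fun m ω => g (X m ω)) 0 n)) atTop (nhds rY)) :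
    entOf μ (fun ω => g (X 0 ω)) ≤ entOf μ (X 0) ∧ hY ≤ hX ∧ rY ≤ rX := by
  classical
  have hFX : ∀ n (a : 𝒳), MeasurableSet (X n ⁻¹' {a}) := fun n a =>
    (hmeas n) (measurableSet_singleton a)
  have hFS : ∀ n (v : Fin n → 𝒳), MeasurableSet (procSeg X 0 n ⁻¹' {v}) := by
    intro n v
    have hset : procSeg X 0 n ⁻¹' {v} = ⋂ i : Fin n, X (0 + i.val) ⁻¹' {v i} := by
      ext ω
      simp only [Set.mem_preimage, Set.mem_singleton_iff, Set.mem_iInter, procSeg, funext_iff]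
    rw [hset]
    exact MeasurableSet.iInter fun i => hFX _ _
  have hFY : ∀ n (y : 𝒴), MeasurableSet ((fun ω => g (X n ω)) ⁻¹' {y}) := by
    intro n y
    have hgy : MeasurableSet (g ⁻¹' {y}) := Set.Finite.measurableSet (Set.toFinite (g ⁻¹' {y}))
    exact hmeas n hgy
  refine ⟨entOf_comp_le μ (X 0) (hFX 0) g, ?_, ?_⟩
  · have cX := hHX.cesaro
    have cY := hHY.cesaro
    simp only [sum_condEnt μ X] at cX
    simp only [sum_condEnt μ (fun m ω => g (X m ω))] at cY
    refine le_of_tendsto_of_tendsto' cY cX fun n => ?_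
    have hle : entOf μ (procSeg (fun m ω => g (X m ω)) 0 n) ≤ entOf μ (procSeg X 0 n) :=
      entOf_comp_le μ (procSeg X 0 n) (hFS n) (fun v i => g (v i))
    exact mul_le_mul_of_nonneg_left hle (by positivity)
  · refine le_of_tendsto_of_tendsto' hRY hRX fun n => ?_
    calc mutInfOf μ (fun ω => g (X n ω)) (procSeg (fun m ω => g (X m ω)) 0 n)
        ≤ mutInfOf μ (fun ω => g (X n ω)) (procSeg X 0 n) :=
          mutInf_comp_right_le μ (fun ω => g (X n ω)) (procSeg X 0 n) (hFY n) (hFS n)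
            (fun v i => g (v i))
      _ ≤ mutInfOf μ (X n) (procSeg X 0 n) :=
          mutInf_comp_left_le μ (X n) (procSeg X 0 n) (hFX n) (hFS n) g
end
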